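/- arXiv:1409.6277 — 3 statements merged into one kernel-verified Lean document; each statement's English description precedes it below -/
import Mathlib

section
/- Let u and v be vertices of a digraph G that are not vertex-resilient but are connected by a path P in the block graph F. Then for every vertex w ∈ V \ {u,v} lying on P, u and v are not strongly connected in G \ w. -/
variable {V : Type*}

/-- Mutual reachability (strong connectivity of a pair) in the digraph `E`. -/
def SConn (E : V → V → Prop) (u v : V) : Prop :=
  Relation.ReflTransGen E u v ∧ Relation.ReflTransGen E v u

/-- The digraph obtained from `E` by deleting vertex `w` (and incident edges). -/
def delV (E : V → V → Prop) (w : V) : V → V → Prop :=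
  fun a b => E a b ∧ a ≠ w ∧ b ≠ w

/-- The digraph obtained from `E` by deleting the single edge `(a,b)`. -/
def delE (E : V → V → Prop) (a b : V) : V → V → Prop :=
  fun x y => E x y ∧ ¬(x = a ∧ y = b)

/-- `u` and `v` are vertex-resilient: they are distinct and remain strongly
connected after deletion of any single other vertex. -/
def VRes (E : V → V → Prop) (u v : V) : Prop :=
  u ≠ v ∧ ∀ w, w ≠ u → w ≠ v → SConn (delV E w) u v

/-- A vertex-resilient block: a maximal set of size ≥ 2 of pairwise
vertex-resilient vertices. -/
def IsVRBlock (E : V → V → Prop) (B : Set V) : Prop :=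
  B.Pairwise (VRes E) ∧ (∃ a ∈ B, ∃ b ∈ B, a ≠ b) ∧
    ∀ B' : Set V, B ⊆ B' → B'.Pairwise (VRes E) → B' = B

/-- `l` is (the vertex list of) a directed path from `u` to `v` in `E`. -/
def IsPathList (E : V → V → Prop) (u v : V) (l : List V) : Prop :=
  l.Chain' E ∧ l.head? = some u ∧ l.getLast? = some v

/-- The internal vertices of a path given as a vertex list. -/
def internalsL (l : List V) : List V := (l.drop 1).dropLast

/-- The edges of a path given as a vertex list. -/
def edgesOfL (l : List V) : List (V × V) := l.zip l.tail

/-- There exist two internally vertex-disjoint (simple, distinct) paths from `u` to `v`. -/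
def TwoVPaths (E : V → V → Prop) (u v : V) : Prop :=
  ∃ l₁ l₂ : List V, IsPathList E u v l₁ ∧ IsPathList E u v l₂ ∧
    l₁.Nodup ∧ l₂.Nodup ∧ l₁ ≠ l₂ ∧ ∀ x ∈ internalsL l₁, x ∉ internalsL l₂

/-- `u` and `v` are 2-vertex-connected. -/
def TwoVConn (E : V → V → Prop) (u v : V) : Prop :=
  u ≠ v ∧ TwoVPaths E u v ∧ TwoVPaths E v u

/-- There exist two edge-disjoint paths from `u` to `v`. -/
def TwoEPaths (E : V → V → Prop) (u v : V) : Prop :=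
  ∃ l₁ l₂ : List V, IsPathList E u v l₁ ∧ IsPathList E u v l₂ ∧
    ∀ e ∈ edgesOfL l₁, e ∉ edgesOfL l₂

/-- `u` and `v` are 2-edge-connected. -/
def TwoEConn (E : V → V → Prop) (u v : V) : Prop :=
  u ≠ v ∧ TwoEPaths E u v ∧ TwoEPaths E v u

/-- A 2-vertex-connected block. -/
def Is2VBlock (E : V → V → Prop) (B : Set V) : Prop :=
  B.Pairwise (TwoVConn E) ∧ (∃ a ∈ B, ∃ b ∈ B, a ≠ b) ∧
    ∀ B' : Set V, B ⊆ B' → B'.Pairwise (TwoVConn E) → B' = B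

/-- A 2-edge-connected block. -/
def Is2EBlock (E : V → V → Prop) (B : Set V) : Prop :=
  B.Pairwise (TwoEConn E) ∧ (∃ a ∈ B, ∃ b ∈ B, a ≠ b) ∧
    ∀ B' : Set V, B ⊆ B' → B'.Pairwise (TwoEConn E) → B' = B

/-- The digraph `E` is strongly connected. -/
def StronglyConn (E : V → V → Prop) : Prop :=
  ∀ u v, Relation.ReflTransGen E u v

/-- `(a,b)` is a strong bridge of the strongly connected digraph `E`. -/
def IsStrongBridge (E : V → V → Prop) (a b : V) : Prop :=
  E a b ∧ ¬ StronglyConn (delE E a b)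

/-- `u` dominates `w` in the flow graph with start vertex `s`:
every path from `s` to `w` contains `u`. -/
def DomOf (E : V → V → Prop) (s u w : V) : Prop :=
  ∀ l : List V, IsPathList E s w l → u ∈ l

/-- `d` is the immediate dominator of `w` in the flow graph with start `s`:
the proper dominator of `w` dominated by all proper dominators of `w`. -/
def IdomOf (E : V → V → Prop) (s d w : V) : Prop :=
  d ≠ w ∧ DomOf E s d w ∧ ∀ u, u ≠ w → DomOf E s u w → DomOf E s u d

/-- The block graph `F` of the digraph `E`: the bipartite undirected graph on the
vertices of `E` together with its vertex-resilient blocks, a vertex `u` being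
adjacent to a block node `B` exactly when `u ∈ B`. -/
def blockGraph (E : V → V → Prop) :
    SimpleGraph (V ⊕ {B : Set V // IsVRBlock E B}) where
  Adj a b := ∃ u B, u ∈ B.1 ∧
    ((a = Sum.inl u ∧ b = Sum.inr B) ∨ (a = Sum.inr B ∧ b = Sum.inl u))
  symm := by
    refine ⟨?_⟩
    rintro a b ⟨u, B, hm, (⟨rfl, rfl⟩ | ⟨rfl, rfl⟩)⟩
    · exact ⟨u, B, hm, Or.inr ⟨rfl, rfl⟩⟩
    · exact ⟨u, B, hm, Or.inl ⟨rfl, rfl⟩⟩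
  loopless := by
    refine ⟨?_⟩
    rintro a ⟨u, B, hm, (⟨rfl, h⟩ | ⟨rfl, h⟩)⟩ <;> simp at h

/-
Two vertices of a common vertex-resilient block stay strongly connected after deleting any
third vertex. Hence, walking along the block graph from `u` to the last block `B₁` before `w`
on `P`, every vertex of `B₁ \ {w}` is strongly connected to `u` in `G \ w`; likewise every
vertex of the block `B₂` after `w` is strongly connected to `v`. If `u` and `v` were strongly
connected in `G \ w`, every vertex of `B₁` would then be vertex-resilient with every vertex of
`B₂` (deleting `w` is the only new case), so by maximality `B₁ = B₂`, and `P` would traverse the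
edge between `w` and this block twice.
-/

open SimpleGraph

section

variable {E : V → V → Prop}

namespace SConn

theorem refl (a : V) : SConn E a a :=
  ⟨.refl, .refl⟩

theorem symm {a b : V} (h : SConn E a b) : SConn E b a :=
  ⟨h.2, h.1⟩

theorem trans {a b c : V} (h₁ : SConn E a b) (h₂ : SConn E b c) : SConn E a c :=
  ⟨h₁.1.trans h₂.1, h₂.2.trans h₁.2⟩

end SConn

theorem VRes.symm {a b : V} (h : VRes E a b) : VRes E b a :=
  ⟨h.1.symm, fun w hwb hwa => (h.2 w hwa hwb).symm⟩

theorem sconn_delV_of_mem {B : Set V} (hB : B.Pairwise (VRes E)) {a b w : V} (ha : a ∈ B)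
    (hb : b ∈ B) (hwa : w ≠ a) (hwb : w ≠ b) : SConn (delV E w) a b := by
  by_cases hab : a = b
  · exact hab ▸ SConn.refl a
  · exact (hB ha hb hab).2 w hwa hwb

def MemNode (a : V) : V ⊕ {B : Set V // IsVRBlock E B} → Prop
  | .inl x => x = a
  | .inr B => a ∈ B.1

theorem sconn_delV_of_walk {w : V} {s t : V ⊕ {B : Set V // IsVRBlock E B}}
    (Q : (blockGraph E).Walk s t) (hQ : Sum.inl w ∉ Q.support) {a c : V} (ha : MemNode a s)
    (hc : MemNode c t) (haw : a ≠ w) (hcw : c ≠ w) : SConn (delV E w) a c := by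
  induction Q generalizing a with
  | @nil s =>
    rcases s with x | B
    · exact (ha : x = a) ▸ (hc : x = c) ▸ SConn.refl x
    · exact sconn_delV_of_mem B.2.1 ha hc haw.symm hcw.symm
  | cons h q ih =>
    simp only [Walk.support_cons, List.mem_cons, not_or] at hQ
    obtain ⟨x, B, hxB, ⟨rfl, rfl⟩ | ⟨rfl, rfl⟩⟩ := h
    · exact ih hQ.2 ((ha : x = a) ▸ hxB) hc haw
    · have hxw : x ≠ w := fun hxw => hQ.2 (hxw ▸ q.start_mem_support)
      exact (sconn_delV_of_mem B.2.1 ha hxB haw.symm hxw.symm).trans (ih hQ.2 rfl hc hxw)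

theorem exists_block_sconn_delV_of_isPath {w c : V}
    (Q : (blockGraph E).Walk (Sum.inl w) (Sum.inl c)) (hQ : Q.IsPath) (hwc : w ≠ c) :
    ∃ B : {B : Set V // IsVRBlock E B}, s(Sum.inl w, Sum.inr B) ∈ Q.edges ∧ w ∈ B.1 ∧
      ∀ a ∈ B.1, a ≠ w → SConn (delV E w) a c := by
  cases Q with
  | nil => exact absurd rfl hwc
  | @cons _ b _ h q =>
    have he : s(Sum.inl w, b) ∈ (Walk.cons h q).edges := by simp
    rw [Walk.cons_isPath_iff] at hQ
    obtain ⟨x, B, hxB, ⟨⟨⟩, rfl⟩ | ⟨⟨⟩, -⟩⟩ := h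
    exact ⟨B, he, hxB, fun a ha haw => sconn_delV_of_walk q hQ.2 ha rfl haw hwc.symm⟩

theorem IsVRBlock.eq_of_sconn_delV {B₁ B₂ : Set V} {w : V} (h₁ : IsVRBlock E B₁)
    (h₂ : IsVRBlock E B₂) (hw₁ : w ∈ B₁) (hw₂ : w ∈ B₂)
    (hsep : ∀ a ∈ B₁, ∀ b ∈ B₂, a ≠ w → b ≠ w → SConn (delV E w) a b) : B₁ = B₂ := by
  have cross : ∀ a ∈ B₁, ∀ b ∈ B₂, a ≠ b → VRes E a b := by
    refine fun a ha b hb hab => ⟨hab, fun z hza hzb => ?_⟩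
    by_cases hzw : z = w
    · subst hzw
      exact hsep a ha b hb hza.symm hzb.symm
    · exact (sconn_delV_of_mem h₁.1 ha hw₁ hza hzw).trans (sconn_delV_of_mem h₂.1 hw₂ hb hzw hzb)
  have hunion : (B₁ ∪ B₂).Pairwise (VRes E) := Set.pairwise_union.2
    ⟨h₁.1, h₂.1, fun a ha b hb hab => ⟨cross a ha b hb hab, (cross a ha b hb hab).symm⟩⟩
  exact (h₁.2.2 _ Set.subset_union_left hunion).symm.trans (h₂.2.2 _ Set.subset_union_right hunion)

end

theorem stmt6_general (E : V → V → Prop) (u v : V)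
    (P : (blockGraph E).Walk (Sum.inl u) (Sum.inl v)) (hP : P.IsPath)
    (w : V) (hwu : w ≠ u) (hwv : w ≠ v) (hw : Sum.inl w ∈ P.support) :
    ¬ SConn (delV E w) u v := by
  classical
  intro h
  obtain ⟨B₁, he₁, hw₁, hB₁⟩ :=
    exists_block_sconn_delV_of_isPath _ (hP.takeUntil hw).reverse hwu
  obtain ⟨B₂, he₂, hw₂, hB₂⟩ := exists_block_sconn_delV_of_isPath _ (hP.dropUntil hw) hwv
  obtain rfl : B₁ = B₂ := Subtype.ext <| B₁.2.eq_of_sconn_delV B₂.2 hw₁ hw₂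
    fun a ha b hb haw hbw => (hB₁ a ha haw).trans (h.trans (hB₂ b hb hbw).symm)
  rw [Walk.edges_reverse, List.mem_reverse] at he₁
  exact hP.isTrail.disjoint_edges_takeUntil_dropUntil hw he₁ he₂

/-- if `u` and `v` are not vertex-resilient but are connected by a path `P`
in the block graph, then every vertex `w ∈ V \ {u,v}` on `P` separates them:
`u` and `v` are not strongly connected in `G \ w`. -/
theorem stmt6 (E : V → V → Prop) (u v : V) (hvr : ¬ VRes E u v)
    (P : (blockGraph E).Walk (Sum.inl u) (Sum.inl v)) (hP : P.IsPath)
    (w : V) (hwu : w ≠ u) (hwv : w ≠ v) (hw : Sum.inl w ∈ P.support) :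
    ¬ SConn (delV E w) u v :=
  stmt6_general E u v P hP w hwu hwv hw
end

section
/- Let G be a strongly connected digraph, s a start vertex, and w ≠ s. Then w is vertex-resilient with s (s↔vr w) if and only if d(w) = s in D(s) and d^R(w) = s in D^R(s), i.e., s is the only proper dominator of w in both the flow graph G(s) and the reverse flow graph G^R(s). -/
variable {V : Type*}

section Aux

variable {E : V → V → Prop} {s u v w x : V}

private lemma rtg_of_chain :
    ∀ (l : List V) (u v : V), l.Chain' E → l.head? = some u → l.getLast? = some v →
      Relation.ReflTransGen E u v
  | [], _, _, _, hh, _ => by simp at hh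
  | [a], u, v, _, hh, hg => by
      simp only [List.head?_cons, Option.some.injEq] at hh
      simp only [List.getLast?_singleton, Option.some.injEq] at hg
      subst hh; subst hg; exact Relation.ReflTransGen.refl
  | a :: b :: t, u, v, hc, hh, hg => by
      simp only [List.head?_cons, Option.some.injEq] at hh
      subst hh
      rw [List.getLast?_cons_cons] at hg
      obtain ⟨hab, hc'⟩ := List.isChain_cons_cons.mp hc
      exact Relation.ReflTransGen.head hab (rtg_of_chain (b :: t) b v hc' rfl hg)

private lemma rtg_of_pathList {l : List V} (h : IsPathList E u v l) :
    Relation.ReflTransGen E u v :=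
  rtg_of_chain l u v h.1 h.2.1 h.2.2

private lemma pathList_of_rtg (h : Relation.ReflTransGen E u v) :
    ∃ l, IsPathList E u v l := by
  induction h using Relation.ReflTransGen.head_induction_on with
  | refl => exact ⟨[v], List.isChain_singleton v, rfl, rfl⟩
  | head hab _ ih =>
    obtain ⟨l, hc, hh, hg⟩ := ih
    match l, hh with
    | b :: t, hh =>
      simp only [List.head?_cons, Option.some.injEq] at hh
      subst hh
      exact ⟨_ :: _ :: t, List.isChain_cons_cons.mpr ⟨hab, hc⟩, rfl,
        by rw [List.getLast?_cons_cons]; exact hg⟩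

private lemma delV_notMem :
    ∀ (l : List V) (u : V), l.Chain' (delV E x) → l.head? = some u → u ≠ x → x ∉ l
  | [], _, _, hh, _ => by simp at hh
  | [a], u, _, hh, hux => by
      simp only [List.head?_cons, Option.some.injEq] at hh
      subst hh
      simpa using fun h => hux h.symm
  | a :: b :: t, u, hc, hh, hux => by
      simp only [List.head?_cons, Option.some.injEq] at hh
      subst hh
      obtain ⟨⟨_, _, hbx⟩, hc'⟩ := List.isChain_cons_cons.mp hc
      have := delV_notMem (b :: t) b hc' rfl hbx
      simp only [List.mem_cons, not_or] at this ⊢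
      exact ⟨fun h => hux h.symm, this⟩

private lemma chain_delV :
    ∀ (l : List V), l.Chain' E → (∀ y ∈ l, y ≠ x) → l.Chain' (delV E x)
  | [], _, _ => List.isChain_nil
  | [a], _, _ => List.isChain_singleton a
  | a :: b :: t, hc, hmem => by
      obtain ⟨hab, hc'⟩ := List.isChain_cons_cons.mp hc
      refine List.isChain_cons_cons.mpr ⟨⟨hab, hmem a (by simp), hmem b (by simp)⟩, ?_⟩
      exact chain_delV (b :: t) hc' fun y hy => hmem y (List.mem_cons_of_mem _ hy)

private lemma pathList_reverse {l : List V} (h : IsPathList E u v l) :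
    IsPathList (fun a b => E b a) v u l.reverse := by
  obtain ⟨hc, hh, hg⟩ := h
  refine ⟨?_, ?_, ?_⟩
  · exact List.isChain_reverse.mpr hc
  · rw [List.head?_reverse]; exact hg
  · rw [List.getLast?_reverse]; exact hh

private lemma dom_self (h : DomOf E s u s) : u = s := by
  have := h [s] ⟨List.isChain_singleton s, rfl, rfl⟩
  simpa using this

private lemma dom_start : DomOf E s s w := by
  intro l hl
  exact List.mem_of_mem_head? (by rw [hl.2.1]; simp)

/-- From vertex-resilience, no `u ∉ {s, w}` dominates `w` (forward graph). -/
private lemma sconn_delV_paths (h : SConn (delV E x) s w) (hxs : s ≠ x) (hxw : w ≠ x) :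
    (∃ l, IsPathList E s w l ∧ x ∉ l) ∧ ∃ l, IsPathList E w s l ∧ x ∉ l := by
  obtain ⟨h1, h2⟩ := h
  constructor
  · obtain ⟨l, hc, hh, hg⟩ := pathList_of_rtg h1
    exact ⟨l, ⟨hc.imp fun _ _ h => h.1, hh, hg⟩, delV_notMem l s hc hh hxs⟩
  · obtain ⟨l, hc, hh, hg⟩ := pathList_of_rtg h2
    exact ⟨l, ⟨hc.imp fun _ _ h => h.1, hh, hg⟩, delV_notMem l w hc hh hxw⟩

end Aux

/-- for `w ≠ s` in a strongly connected digraph, `s` and `w` are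
vertex-resilient iff `s` is the immediate dominator of `w` in both the flow graph
`G(s)` and the reverse flow graph `G^R(s)`. -/
theorem stmt11 (E : V → V → Prop) (s w : V) (hsc : StronglyConn E) (hws : w ≠ s) :
    VRes E s w ↔ IdomOf E s s w ∧ IdomOf (fun a b => E b a) s s w := by
  constructor
  · rintro ⟨hsw, hres⟩
    refine ⟨⟨hws.symm, dom_start, ?_⟩, ⟨hws.symm, dom_start, ?_⟩⟩
    · intro u huw hdom
      by_cases hus : u = s
      · subst hus; exact dom_start
      · exfalso
        obtain ⟨⟨l, hl, hx⟩, _⟩ :=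
          sconn_delV_paths (hres u hus huw) (Ne.symm hus) (Ne.symm huw)
        exact hx (hdom l hl)
    · intro u huw hdom
      by_cases hus : u = s
      · subst hus; exact dom_start
      · exfalso
        obtain ⟨_, ⟨l, hl, hx⟩⟩ :=
          sconn_delV_paths (hres u hus huw) (Ne.symm hus) (Ne.symm huw)
        exact hx (List.mem_reverse.mp (hdom l.reverse (pathList_reverse hl)))
  · rintro ⟨⟨_, _, h1⟩, ⟨_, _, h2⟩⟩
    refine ⟨hws.symm, fun x hxs hxw => ?_⟩
    have hd1 : ¬ DomOf E s x w := fun hd => hxs (dom_self (h1 x hxw hd))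
    have hd2 : ¬ DomOf (fun a b => E b a) s x w := fun hd => hxs (dom_self (h2 x hxw hd))
    simp only [DomOf, not_forall] at hd1 hd2
    obtain ⟨l₁, hl₁, hx₁⟩ := hd1
    obtain ⟨l₂, hl₂, hx₂⟩ := hd2
    constructor
    · refine rtg_of_pathList (u := s) (v := w)
        ⟨chain_delV l₁ hl₁.1 ?_, hl₁.2.1, hl₁.2.2⟩
      intro y hy h; exact hx₁ (h ▸ hy)
    · have hrev := pathList_reverse hl₂
      refine rtg_of_pathList (u := w) (v := s)
        ⟨chain_delV l₂.reverse hrev.1 ?_, hrev.2.1, hrev.2.2⟩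
      intro y hy h
      exact hx₂ (List.mem_reverse.mp (h ▸ hy))
end

section
/- Let u, v, x, y be distinct vertices of a digraph such that u↔2v x, v↔2v x, u↔2v y, and v↔2v y. Then x↔2v y and u↔2v v. -/
variable {V : Type*}

/-!
By Menger's theorem for two paths, `TwoVPaths E p q` holds exactly when `p ≠ q` and `q` stays
reachable from `p` after deleting any single vertex other than `p`, `q`, or any single edge. Both
conditions pass through an intermediate vertex `m`: a deleted vertex `w ≠ m` is avoided on the
way `p → m → q`, and if `w = m` one goes through a second intermediate vertex instead. Applied to
`x → u → y`, `x → v → y` and to `u → x → v`, `u → y → v` this gives the theorem.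

Menger's theorem is reduced to its edge version by splitting every vertex into an entry and an
exit copy. The edge version follows by augmenting one path along the residual graph: the
resulting flow of value two decomposes into two edge-disjoint paths.
-/

open Relation

section PathLists

variable {α : Type*} {r : α → α → Prop} {l : List α} {a b : α}

theorem edgesOfL_cons_cons (l : List α) :
    edgesOfL (a :: b :: l) = (a, b) :: edgesOfL (b :: l) := rfl

theorem edgesOfL_eq_zip_dropLast_tail (l : List α) : edgesOfL l = l.dropLast.zip l.tail := by
  induction l with
  | nil => rfl
  | cons a t ih =>
    cases t with
    | nil => rfl
    | cons b t => simp [edgesOfL_cons_cons, ih]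

theorem map_fst_edgesOfL (l : List α) : (edgesOfL l).map Prod.fst = l.dropLast := by
  rw [edgesOfL_eq_zip_dropLast_tail, List.map_fst_zip (by simp)]

theorem map_snd_edgesOfL (l : List α) : (edgesOfL l).map Prod.snd = l.tail := by
  rw [edgesOfL_eq_zip_dropLast_tail, List.map_snd_zip (by simp)]

theorem fst_mem_dropLast_of_mem_edgesOfL {e : α × α} (he : e ∈ edgesOfL l) :
    e.1 ∈ l.dropLast :=
  map_fst_edgesOfL l ▸ List.mem_map_of_mem he

theorem snd_mem_tail_of_mem_edgesOfL {e : α × α} (he : e ∈ edgesOfL l) : e.2 ∈ l.tail :=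
  map_snd_edgesOfL l ▸ List.mem_map_of_mem he

theorem fst_mem_of_mem_edgesOfL {e : α × α} (he : e ∈ edgesOfL l) : e.1 ∈ l :=
  List.dropLast_subset l (fst_mem_dropLast_of_mem_edgesOfL he)

theorem snd_mem_of_mem_edgesOfL {e : α × α} (he : e ∈ edgesOfL l) : e.2 ∈ l :=
  List.mem_of_mem_tail (snd_mem_tail_of_mem_edgesOfL he)

theorem nodup_edgesOfL (hl : l.Nodup) : (edgesOfL l).Nodup :=
  List.Nodup.of_map Prod.fst (map_fst_edgesOfL l ▸ hl.sublist (List.dropLast_sublist l))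

theorem isChain_iff_forall_mem_edgesOfL : l.IsChain r ↔ ∀ e ∈ edgesOfL l, r e.1 e.2 := by
  induction l with
  | nil => simp [edgesOfL]
  | cons a t ih =>
    cases t with
    | nil => simp [edgesOfL]
    | cons b t => simp [edgesOfL_cons_cons, List.isChain_cons_cons, ih]

theorem reflTransGen_of_forall_mem_edgesOfL (hh : l.head? = some a) (hl : l.getLast? = some b)
    (hr : ∀ e ∈ edgesOfL l, r e.1 e.2) : ReflTransGen r a b := by
  obtain ⟨t, rfl⟩ : ∃ t, l = a :: t := ⟨l.tail, List.eq_cons_of_mem_head? hh⟩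
  refine List.relationReflTransGen_of_exists_isChain_cons t
    (isChain_iff_forall_mem_edgesOfL.2 hr) ?_
  simpa [List.getLast?_eq_some_getLast] using hl

theorem exists_isPathList_nodup_of_reflTransGen (h : ReflTransGen r a b) :
    ∃ l, IsPathList r a b l ∧ l.Nodup := by
  induction h with
  | refl => exact ⟨[a], ⟨List.isChain_singleton a, rfl, rfl⟩, List.nodup_singleton a⟩
  | @tail c d _ hcd ih =>
    obtain ⟨l, ⟨hch, hh, hl⟩, hnd⟩ := ih
    by_cases hd : d ∈ l
    · obtain ⟨s, t, rfl⟩ := List.append_of_mem hd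
      refine ⟨s ++ [d], ⟨hch.prefix ⟨t, by simp⟩, ?_, by simp⟩, ?_⟩
      · cases s <;> simp_all
      · exact hnd.sublist (by simp)
    · refine ⟨l ++ [d], ⟨hch.append (List.isChain_singleton d) ?_, ?_, by simp⟩, ?_⟩
      · intro x hx y hy
        obtain rfl : d = y := by simpa using hy
        obtain rfl : c = x := by simpa [hl] using hx
        exact hcd
      · simp [List.head?_append, hh]
      · exact List.nodup_append.2 ⟨hnd, List.nodup_singleton d, by grind⟩

theorem head_notMem_tail_of_nodup (hnd : l.Nodup) (hh : l.head? = some a) : a ∉ l.tail := by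
  obtain ⟨t, rfl⟩ : ∃ t, l = a :: t := ⟨l.tail, List.eq_cons_of_mem_head? hh⟩
  exact (List.nodup_cons.1 hnd).1

theorem getLast_notMem_dropLast_of_nodup (hnd : l.Nodup) (hl : l.getLast? = some b) :
    b ∉ l.dropLast := by
  have hne : l ≠ [] := by rintro rfl; simp at hl
  rw [← List.dropLast_append_getLast hne, List.nodup_append] at hnd
  rw [List.getLast?_eq_some_getLast hne, Option.some_inj] at hl
  exact fun hb => hnd.2.2 b hb _ (by simp) hl.symm

theorem mem_internalsL_of_ne (hh : l.head? = some a) (hl : l.getLast? = some b) {z : α}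
    (hz : z ∈ l) (hza : z ≠ a) (hzb : z ≠ b) : z ∈ internalsL l := by
  obtain ⟨t, rfl⟩ : ∃ t, l = a :: t := ⟨l.tail, List.eq_cons_of_mem_head? hh⟩
  have hzt : z ∈ t := by simpa [hza] using hz
  have hne : t ≠ [] := List.ne_nil_of_mem hzt
  have hb : t.getLast hne = b := by
    rw [List.getLast?_cons, List.getLast?_eq_some_getLast hne] at hl
    simpa using hl
  rw [← List.dropLast_append_getLast hne, hb] at hzt
  simpa [internalsL, hzb] using hzt

theorem mem_dropLast_of_mem_internalsL {z : α} (hz : z ∈ internalsL l) : z ∈ l.dropLast := by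
  rw [internalsL, List.drop_one, ← List.tail_dropLast] at hz
  exact List.mem_of_mem_tail hz

theorem mem_tail_of_mem_internalsL {z : α} (hz : z ∈ internalsL l) : z ∈ l.tail := by
  rw [internalsL, List.drop_one] at hz
  exact List.dropLast_subset _ hz

theorem eq_pair_of_mem_edgesOfL (hnd : l.Nodup) (hh : l.head? = some a)
    (hl : l.getLast? = some b) (hab : (a, b) ∈ edgesOfL l) : l = [a, b] := by
  obtain ⟨t, rfl⟩ : ∃ t, l = a :: t := ⟨l.tail, List.eq_cons_of_mem_head? hh⟩
  cases t with
  | nil => simp [edgesOfL] at hab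
  | cons c t =>
    rw [edgesOfL_cons_cons, List.mem_cons] at hab
    rcases hab with hab | hab
    · obtain rfl : b = c := (Prod.mk.inj hab).2
      cases t with
      | nil => rfl
      | cons d t =>
        have hb : b ∈ d :: t := by
          simp only [List.getLast?_cons_cons] at hl
          rw [List.getLast?_eq_some_getLast (List.cons_ne_nil d t), Option.some_inj] at hl
          exact hl ▸ List.getLast_mem _
        exact absurd hb (List.nodup_cons.1 (List.nodup_cons.1 hnd).2).1
    · exact absurd (fst_mem_of_mem_edgesOfL hab) (List.nodup_cons.1 hnd).1

theorem exists_mem_edgesOfL_crossing {p : α → Prop} (hh : l.head? = some a)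
    (hl : l.getLast? = some b) (ha : p a) (hb : ¬ p b) : ∃ e ∈ edgesOfL l, p e.1 ∧ ¬ p e.2 := by
  induction l generalizing a with
  | nil => simp at hh
  | cons c t ih =>
    obtain rfl : c = a := by simpa using hh
    cases t with
    | nil =>
      obtain rfl : c = b := by simpa using hl
      exact absurd ha hb
    | cons d t =>
      rw [List.getLast?_cons_cons] at hl
      by_cases hd : p d
      · obtain ⟨e, he, hpe⟩ := ih rfl hl hd
        exact ⟨e, by rw [edgesOfL_cons_cons]; exact List.mem_cons_of_mem _ he, hpe⟩
      · exact ⟨(c, d), by simp [edgesOfL_cons_cons], ha, hd⟩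

theorem mem_edgesOfL_crossing_unique {p : α → Prop} (hl : l.IsChain fun c d => p d → p c)
    {e f : α × α} (he : e ∈ edgesOfL l) (he₁ : p e.1) (he₂ : ¬ p e.2)
    (hf : f ∈ edgesOfL l) (hf₁ : p f.1) (hf₂ : ¬ p f.2) : e = f := by
  induction l with
  | nil => simp [edgesOfL] at he
  | cons a t ih =>
    cases t with
    | nil => simp [edgesOfL] at he
    | cons b t =>
      rw [List.isChain_cons_cons] at hl
      have outside : ¬ p b → ∀ g ∈ edgesOfL (b :: t), ¬ p g.1 := fun hb g hg =>
        hl.2.induction (¬ p ·) _ (fun _ _ h hc hd => hc (h hd)) (fun _ => hb) _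
          (fst_mem_of_mem_edgesOfL hg)
      rw [edgesOfL_cons_cons, List.mem_cons] at he hf
      rcases he with rfl | he <;> rcases hf with rfl | hf
      · rfl
      · exact absurd hf₁ (outside he₂ f hf)
      · exact absurd he₁ (outside hf₂ e he)
      · exact ih hl.2 he hf

theorem sum_map_edgesOfL_sub {G : Type*} [AddCommGroup G] (hh : l.head? = some a)
    (hl : l.getLast? = some b) (f : α → G) :
    ((edgesOfL l).map fun e => f e.1 - f e.2).sum = f a - f b := by
  induction l generalizing a with
  | nil => simp at hh
  | cons c t ih =>
    obtain rfl : c = a := by simpa using hh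
    cases t with
    | nil => simp [show c = b by simpa using hl, edgesOfL]
    | cons d t =>
      rw [List.getLast?_cons_cons] at hl
      rw [edgesOfL_cons_cons, List.map_cons, List.sum_cons, ih rfl hl]
      abel

end PathLists

section Resilience

variable {E : V → V → Prop} {x y : V}

theorem TwoVPaths.reflTransGen_delV (h : TwoVPaths E x y) {w : V} (hwx : w ≠ x) (hwy : w ≠ y) :
    ReflTransGen (delV E w) x y := by
  obtain ⟨l₁, l₂, h₁, h₂, -, -, -, hdisj⟩ := h
  have avoid : ∀ l, IsPathList E x y l → w ∉ l → ReflTransGen (delV E w) x y :=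
    fun l hl hw => reflTransGen_of_forall_mem_edgesOfL hl.2.1 hl.2.2 fun e he =>
      ⟨isChain_iff_forall_mem_edgesOfL.1 hl.1 e he, fun h => hw (h ▸ fst_mem_of_mem_edgesOfL he),
        fun h => hw (h ▸ snd_mem_of_mem_edgesOfL he)⟩
  by_cases hw : w ∈ l₁
  · refine avoid l₂ h₂ fun hw₂ => hdisj w ?_ ?_
    · exact mem_internalsL_of_ne h₁.2.1 h₁.2.2 hw hwx hwy
    · exact mem_internalsL_of_ne h₂.2.1 h₂.2.2 hw₂ hwx hwy
  · exact avoid l₁ h₁ hw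

theorem TwoVPaths.reflTransGen_delE (h : TwoVPaths E x y) (a b : V) :
    ReflTransGen (delE E a b) x y := by
  obtain ⟨l₁, l₂, h₁, h₂, hnd₁, hnd₂, hne, hdisj⟩ := h
  have avoid : ∀ l, IsPathList E x y l → (a, b) ∉ edgesOfL l →
      ReflTransGen (delE E a b) x y :=
    fun l hl hab => reflTransGen_of_forall_mem_edgesOfL hl.2.1 hl.2.2 fun e he =>
      ⟨isChain_iff_forall_mem_edgesOfL.1 hl.1 e he, fun ⟨h₁, h₂⟩ => hab (h₁ ▸ h₂ ▸ he)⟩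
  by_cases hab₁ : (a, b) ∈ edgesOfL l₁
  · -- an edge on both paths can only be `(x, y)`, and then both paths are `[x, y]`
    refine avoid l₂ h₂ fun hab₂ => hne ?_
    have shared : ∀ z ∈ l₁, z ∈ l₂ → z = x ∨ z = y := fun z hz₁ hz₂ => by
      by_contra! hz
      exact hdisj z (mem_internalsL_of_ne h₁.2.1 h₁.2.2 hz₁ hz.1 hz.2)
        (mem_internalsL_of_ne h₂.2.1 h₂.2.2 hz₂ hz.1 hz.2)
    obtain rfl : a = x :=
      (shared a (fst_mem_of_mem_edgesOfL hab₁) (fst_mem_of_mem_edgesOfL hab₂)).resolve_right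
        fun hay => getLast_notMem_dropLast_of_nodup hnd₁ h₁.2.2
          (hay ▸ fst_mem_dropLast_of_mem_edgesOfL hab₁)
    obtain rfl : b = y :=
      (shared b (snd_mem_of_mem_edgesOfL hab₁) (snd_mem_of_mem_edgesOfL hab₂)).resolve_left
        fun hbx => head_notMem_tail_of_nodup hnd₁ h₁.2.1
          (hbx ▸ snd_mem_tail_of_mem_edgesOfL hab₁)
    rw [eq_pair_of_mem_edgesOfL hnd₁ h₁.2.1 h₁.2.2 hab₁,
      eq_pair_of_mem_edgesOfL hnd₂ h₂.2.1 h₂.2.2 hab₂]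
  · exact avoid l₁ h₁ hab₁

end Resilience

section Flow

variable {W : Type*} [DecidableEq W]

def netOutflow (A : Finset (W × W)) (w : W) : ℤ :=
  ∑ e ∈ A, ((if e.1 = w then 1 else 0) - if e.2 = w then 1 else 0)

variable {A B : Finset (W × W)} {w : W}

theorem netOutflow_union (h : Disjoint A B) :
    netOutflow (A ∪ B) w = netOutflow A w + netOutflow B w :=
  Finset.sum_union h

theorem netOutflow_sdiff (h : B ⊆ A) : netOutflow (A \ B) w = netOutflow A w - netOutflow B w :=
  Finset.sum_sdiff_eq_sub h

theorem netOutflow_image_swap : netOutflow (A.image Prod.swap) w = -netOutflow A w := by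
  rw [netOutflow, Finset.sum_image (fun _ _ _ _ h => Prod.swap_injective h), netOutflow,
    ← Finset.sum_neg_distrib]
  simp

theorem netOutflow_erase {e : W × W} (he : e ∈ A) :
    netOutflow (A.erase e) w =
      netOutflow A w - ((if e.1 = w then 1 else 0) - if e.2 = w then 1 else 0) :=
  Finset.sum_erase_eq_sub he

theorem netOutflow_edgesOfL {l : List W} {s t : W} (hh : l.head? = some s)
    (hl : l.getLast? = some t) (hnd : l.Nodup) :
    netOutflow (edgesOfL l).toFinset w = (if s = w then 1 else 0) - if t = w then 1 else 0 := by
  rw [netOutflow, List.sum_toFinset _ (nodup_edgesOfL hnd)]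
  exact sum_map_edgesOfL_sub hh hl fun v => if v = w then (1 : ℤ) else 0

theorem exists_mem_fst_eq_of_netOutflow_pos (h : 0 < netOutflow A w) : ∃ e ∈ A, e.1 = w := by
  by_contra! hA
  refine (Finset.sum_nonpos fun e he => ?_).not_gt h
  simp only [if_neg (hA e he)]
  split_ifs <;> norm_num

/-- Euler's argument: follow unused edges out of `s`; balance forces the walk to end at `t`. -/
theorem reflTransGen_of_netOutflow_pos {t : W} (hA : ∀ w ≠ t, 0 ≤ netOutflow A w) {s : W}
    (hs : 0 < netOutflow A s) : ReflTransGen (fun a b => (a, b) ∈ A) s t := by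
  induction A using Finset.strongInduction generalizing s with
  | H A ih =>
    by_cases hst : s = t
    · exact hst ▸ ReflTransGen.refl
    obtain ⟨e, heA, rfl⟩ := exists_mem_fst_eq_of_netOutflow_pos hs
    have hrest : ReflTransGen (fun a b => (a, b) ∈ A.erase e) e.2 t := by
      by_cases het : e.2 = t
      · exact het ▸ ReflTransGen.refl
      refine ih _ (Finset.erase_ssubset heA) (fun w hw => ?_) ?_ <;> rw [netOutflow_erase heA]
      · have := hA w hw
        split_ifs <;> subst_vars <;> omega
      · have := hA e.2 het
        split_ifs <;> simp_all
    exact .head heA (ReflTransGen.mono (fun _ _ => Finset.mem_of_mem_erase) _ _ hrest)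

end Flow

section EdgeMenger

variable {W : Type*} {F : W → W → Prop} {s t : W}

def residualGraph (F : W → W → Prop) (P : List W) (p q : W) : Prop :=
  (F p q ∧ (p, q) ∉ edgesOfL P) ∨ (q, p) ∈ edgesOfL P

/-- If `t` were not reachable in the residual graph, the edge where `P` leaves the reachable set
would be the only edge of `F` leaving it: deleting it would separate `s` from `t`. -/
theorem reflTransGen_residualGraph {P : List W} (hP : IsPathList F s t P)
    (h : ∀ a b, ReflTransGen (delE F a b) s t) : ReflTransGen (residualGraph F P) s t := by
  by_contra ht
  obtain ⟨e, heP, he₁, he₂⟩ := exists_mem_edgesOfL_crossing hP.2.1 hP.2.2 .refl ht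
  obtain ⟨L, hL, -⟩ := exists_isPathList_nodup_of_reflTransGen (h e.1 e.2)
  obtain ⟨f, hfL, hf₁, hf₂⟩ := exists_mem_edgesOfL_crossing hL.2.1 hL.2.2 .refl ht
  have hfF : delE F e.1 e.2 f.1 f.2 := isChain_iff_forall_mem_edgesOfL.1 hL.1 f hfL
  have hfP : f ∈ edgesOfL P := by
    by_contra hf
    exact hf₂ (hf₁.tail (Or.inl ⟨hfF.1, hf⟩))
  have hPin : P.IsChain fun c d => ReflTransGen (residualGraph F P) s d →
      ReflTransGen (residualGraph F P) s c :=
    isChain_iff_forall_mem_edgesOfL.2 fun g hg hd => hd.tail (Or.inr hg)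
  obtain rfl := mem_edgesOfL_crossing_unique hPin heP he₁ he₂ hfP hf₁ hf₂
  exact hfF.2 ⟨rfl, rfl⟩

section

variable [DecidableEq W]

/-- Cancelling the edges of `P` traversed backwards by `Q` leaves a set of `F`-edges carrying the
sum of the two flows. -/
theorem exists_netOutflow_eq_add {P Q : List W} (hP : P.IsChain F)
    (hQ : Q.IsChain (residualGraph F P)) :
    ∃ A : Finset (W × W), (∀ e ∈ A, F e.1 e.2) ∧ ∀ w, netOutflow A w =
      netOutflow (edgesOfL P).toFinset w + netOutflow (edgesOfL Q).toFinset w := by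
  set EP := (edgesOfL P).toFinset
  set EQ := (edgesOfL Q).toFinset
  set C := EQ.filter fun e => e.swap ∈ EP
  have hCP : C.image Prod.swap ⊆ EP := by
    intro e he
    obtain ⟨f, hf, rfl⟩ := Finset.mem_image.1 he
    exact (Finset.mem_filter.1 hf).2
  have hQF : ∀ e ∈ EQ \ C, F e.1 e.2 ∧ e ∉ EP := by
    intro e he
    obtain ⟨heQ, heC⟩ := Finset.mem_sdiff.1 he
    rcases isChain_iff_forall_mem_edgesOfL.1 hQ e (List.mem_toFinset.1 heQ) with h | h
    · exact ⟨h.1, fun heP => h.2 (List.mem_toFinset.1 heP)⟩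
    · exact absurd (Finset.mem_filter.2 ⟨heQ, show e.swap ∈ EP from List.mem_toFinset.2 h⟩) heC
  refine ⟨(EP \ C.image Prod.swap) ∪ (EQ \ C), fun e he => ?_, fun w => ?_⟩
  · rcases Finset.mem_union.1 he with he | he
    · exact isChain_iff_forall_mem_edgesOfL.1 hP e
        (List.mem_toFinset.1 (Finset.mem_sdiff.1 he).1)
    · exact (hQF e he).1
  · have hdisj : Disjoint (EP \ C.image Prod.swap) (EQ \ C) :=
      Finset.disjoint_left.2 fun e he he' => (hQF e he').2 (Finset.mem_sdiff.1 he).1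
    rw [netOutflow_union hdisj, netOutflow_sdiff hCP, netOutflow_sdiff (Finset.filter_subset _ _),
      netOutflow_image_swap]
    ring

theorem twoEPaths_of_netOutflow {A : Finset (W × W)} (hAF : ∀ e ∈ A, F e.1 e.2)
    (hA : ∀ w ≠ t, 0 ≤ netOutflow A w) (hs : 2 ≤ netOutflow A s) : TwoEPaths F s t := by
  obtain ⟨P₁, hP₁, hnd₁⟩ := exists_isPathList_nodup_of_reflTransGen
    (reflTransGen_of_netOutflow_pos hA (s := s) (by omega))
  have hP₁A : (edgesOfL P₁).toFinset ⊆ A := fun e he =>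
    isChain_iff_forall_mem_edgesOfL.1 hP₁.1 e (List.mem_toFinset.1 he)
  have hnet := fun w => netOutflow_edgesOfL (w := w) hP₁.2.1 hP₁.2.2 hnd₁
  have hA₁ : ∀ w ≠ t, 0 ≤ netOutflow (A \ (edgesOfL P₁).toFinset) w := fun w hw => by
    have := hA w hw
    rw [netOutflow_sdiff hP₁A, hnet]
    split_ifs <;> subst_vars <;> omega
  have hs₁ : 0 < netOutflow (A \ (edgesOfL P₁).toFinset) s := by
    rw [netOutflow_sdiff hP₁A, hnet]
    split_ifs <;> omega
  obtain ⟨P₂, hP₂, -⟩ :=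
    exists_isPathList_nodup_of_reflTransGen (reflTransGen_of_netOutflow_pos hA₁ hs₁)
  have hP₂A := isChain_iff_forall_mem_edgesOfL.1 hP₂.1
  refine ⟨P₁, P₂, ⟨?_, hP₁.2⟩, ⟨?_, hP₂.2⟩, fun e he₁ he₂ => ?_⟩
  · exact isChain_iff_forall_mem_edgesOfL.2 fun e he => hAF e (hP₁A (List.mem_toFinset.2 he))
  · exact isChain_iff_forall_mem_edgesOfL.2 fun e he => hAF e (Finset.mem_sdiff.1 (hP₂A e he)).1
  · exact (Finset.mem_sdiff.1 (hP₂A e he₂)).2 (List.mem_toFinset.2 he₁)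

end

theorem twoEPaths_of_forall_reflTransGen_delE (hst : s ≠ t)
    (h : ∀ a b, ReflTransGen (delE F a b) s t) : TwoEPaths F s t := by
  classical
  obtain ⟨P, hP, hPnd⟩ := exists_isPathList_nodup_of_reflTransGen
    (ReflTransGen.mono (fun _ _ h => h.1) _ _ (h s s))
  obtain ⟨Q, hQ, hQnd⟩ :=
    exists_isPathList_nodup_of_reflTransGen (reflTransGen_residualGraph hP h)
  obtain ⟨A, hAF, hA⟩ := exists_netOutflow_eq_add hP.1 hQ.1
  have hnet : ∀ w, netOutflow A w = 2 * ((if s = w then 1 else 0) - if t = w then 1 else 0) :=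
    fun w => by
      rw [hA, netOutflow_edgesOfL hP.2.1 hP.2.2 hPnd, netOutflow_edgesOfL hQ.2.1 hQ.2.2 hQnd]
      ring
  refine twoEPaths_of_netOutflow hAF (fun w hw => ?_) ?_ <;> rw [hnet] <;> split_ifs <;> simp_all

end EdgeMenger

section VertexMenger

variable {E : V → V → Prop} {x y : V}

/-- `(v, false)` and `(v, true)` are the entry and the exit copy of `v`, joined by one edge; an
edge `u → v` of `E` becomes `(u, true) → (v, false)`. -/
def splitGraph (E : V → V → Prop) (p q : V × Bool) : Prop :=
  (p.2 = true ∧ q.2 = false ∧ E p.1 q.1) ∨ (p.2 = false ∧ q.2 = true ∧ p.1 = q.1)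

theorem Relation.ReflTransGen.lift_split {G : V → V → Prop} {r : V × Bool → V × Bool → Prop}
    (hG : ReflTransGen G x y) (hxy : x ≠ y) (hedge : ∀ p q, G p q → r (p, true) (q, false))
    (hvertex : ∀ p q, G p q → q ≠ x → q ≠ y → r (q, false) (q, true)) :
    ReflTransGen r (x, true) (y, false) := by
  classical
  obtain ⟨l, hl, hnd⟩ := exists_isPathList_nodup_of_reflTransGen hG
  have hsimple : ReflTransGen (fun p q => G p q ∧ p ≠ y ∧ q ≠ x) x y :=
    reflTransGen_of_forall_mem_edgesOfL hl.2.1 hl.2.2 fun e he =>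
      ⟨isChain_iff_forall_mem_edgesOfL.1 hl.1 e he,
        fun h => getLast_notMem_dropLast_of_nodup hnd hl.2.2
          (h ▸ fst_mem_dropLast_of_mem_edgesOfL he),
        fun h => head_notMem_tail_of_nodup hnd hl.2.1 (h ▸ snd_mem_tail_of_mem_edgesOfL he)⟩
  let f : V → V × Bool := fun v => if v = y then (y, false) else (v, true)
  have hf : ∀ p q, G p q ∧ p ≠ y ∧ q ≠ x → ReflTransGen r (f p) (f q) := by
    rintro p q ⟨hpq, hpy, hqx⟩
    by_cases hqy : q = y
    · subst hqy
      simpa [f, hpy] using ReflTransGen.single (hedge p q hpq)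
    · simpa [f, hpy, hqy] using
        ReflTransGen.head (hedge p q hpq) (ReflTransGen.single (hvertex p q hpq hqx hqy))
  simpa [f, hxy, Function.onFun] using ReflTransGen.lift' f hf _ _ hsimple

theorem reflTransGen_splitGraph_delE (hxy : x ≠ y)
    (hv : ∀ w, w ≠ x → w ≠ y → ReflTransGen (delV E w) x y)
    (he : ∀ a b, ReflTransGen (delE E a b) x y) (a b : V × Bool) :
    ReflTransGen (delE (splitGraph E) a b) (x, true) (y, false) := by
  obtain ⟨a, ba⟩ := a
  obtain ⟨b, bb⟩ := b
  by_cases hedge : ba = true ∧ bb = false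
  · obtain ⟨rfl, rfl⟩ := hedge
    refine (he a b).lift_split hxy (fun _ _ hpq => ⟨Or.inl ⟨rfl, rfl, hpq.1⟩, ?_⟩)
      fun _ _ _ _ _ => ⟨Or.inr ⟨rfl, rfl, rfl⟩, by simp⟩
    simpa using hpq.2
  by_cases hvertex : ba = false ∧ bb = true ∧ a = b ∧ a ≠ x ∧ a ≠ y
  · obtain ⟨rfl, rfl, rfl, hax, hay⟩ := hvertex
    refine (hv a hax hay).lift_split hxy (fun _ _ hpq => ⟨Or.inl ⟨rfl, rfl, hpq.1⟩, by simp⟩)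
      fun _ _ hpq _ _ => ⟨Or.inr ⟨rfl, rfl, rfl⟩, ?_⟩
    simpa using hpq.2.2
  refine (ReflTransGen.mono (fun _ _ h => h.1) _ _ (he x x)).lift_split hxy
    (fun _ _ hpq => ⟨Or.inl ⟨rfl, rfl, hpq⟩, ?_⟩) fun _ q _ hqx hqy => ⟨Or.inr ⟨rfl, rfl, rfl⟩, ?_⟩
  · simp_all
  · rintro ⟨h₁, h₂⟩
    obtain ⟨rfl, rfl⟩ := Prod.mk.inj h₁
    obtain ⟨rfl, rfl⟩ := Prod.mk.inj h₂
    exact hvertex ⟨rfl, rfl, rfl, hqx, hqy⟩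

theorem exists_isPathList_of_isPathList_splitGraph {L : List (V × Bool)}
    (hL : IsPathList (splitGraph E) (x, true) (y, false) L) :
    ∃ M, IsPathList E x y M ∧ M.Nodup ∧
      (∀ e ∈ edgesOfL M, ((e.1, true), (e.2, false)) ∈ edgesOfL L) ∧
      ∀ w ∈ internalsL M, ((w, false), (w, true)) ∈ edgesOfL L := by
  set r : V → V → Prop := fun p q =>
    ((p, true), (q, false)) ∈ edgesOfL L ∧ (q = y ∨ ((q, false), (q, true)) ∈ edgesOfL L)
  have hsplit := isChain_iff_forall_mem_edgesOfL.1 hL.1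
  have project : ∀ u, ReflTransGen (fun u v => (u, v) ∈ edgesOfL L) u (y, false) →
      ReflTransGen r u.1 y ∧
        (u.2 = false → u.1 = y ∨ ((u.1, false), (u.1, true)) ∈ edgesOfL L) := by
    intro u hu
    induction hu using ReflTransGen.head_induction_on with
    | refl => exact ⟨.refl, fun _ => Or.inl rfl⟩
    | @head u v huv _ ih =>
      obtain ⟨a, ba⟩ := u
      obtain ⟨b, bb⟩ := v
      rcases hsplit _ huv with ⟨rfl, rfl, -⟩ | ⟨rfl, rfl, hab⟩
      · exact ⟨ReflTransGen.head ⟨huv, ih.2 rfl⟩ ih.1, nofun⟩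
      · obtain rfl : a = b := hab
        exact ⟨ih.1, fun _ => Or.inr huv⟩
  obtain ⟨M, hM, hnd⟩ := exists_isPathList_nodup_of_reflTransGen
    (project _ (reflTransGen_of_forall_mem_edgesOfL hL.2.1 hL.2.2 fun e he => he)).1
  have hMr := isChain_iff_forall_mem_edgesOfL.1 hM.1
  refine ⟨M, ⟨isChain_iff_forall_mem_edgesOfL.2 fun e he => ?_, hM.2⟩, hnd,
    fun e he => (hMr e he).1, fun w hw => ?_⟩
  · simpa [splitGraph] using hsplit _ (hMr e he).1
  · obtain ⟨e, he, rfl⟩ :=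
      List.mem_map.1 ((map_snd_edgesOfL M).symm ▸ mem_tail_of_mem_internalsL hw)
    refine (hMr e he).2.resolve_left fun hy => ?_
    exact getLast_notMem_dropLast_of_nodup hnd hM.2.2 (hy ▸ mem_dropLast_of_mem_internalsL hw)

theorem twoVPaths_of_forall_reflTransGen (hxy : x ≠ y)
    (hv : ∀ w, w ≠ x → w ≠ y → ReflTransGen (delV E w) x y)
    (he : ∀ a b, ReflTransGen (delE E a b) x y) : TwoVPaths E x y := by
  obtain ⟨L₁, L₂, hL₁, hL₂, hdisj⟩ :=
    twoEPaths_of_forall_reflTransGen_delE (by simp [hxy]) (reflTransGen_splitGraph_delE hxy hv he)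
  obtain ⟨M₁, hM₁, hnd₁, hedge₁, hint₁⟩ := exists_isPathList_of_isPathList_splitGraph hL₁
  obtain ⟨M₂, hM₂, hnd₂, hedge₂, hint₂⟩ := exists_isPathList_of_isPathList_splitGraph hL₂
  refine ⟨M₁, M₂, hM₁, hM₂, hnd₁, hnd₂, ?_, fun w h₁ h₂ => hdisj _ (hint₁ w h₁) (hint₂ w h₂)⟩
  rintro rfl
  obtain ⟨e, he, -⟩ := exists_mem_edgesOfL_crossing (p := (· = x)) hM₁.2.1 hM₁.2.2 rfl hxy.symm
  exact hdisj _ (hedge₁ e he) (hedge₂ e he)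

end VertexMenger

theorem TwoVPaths.glue {E : V → V → Prop} {p q m₁ m₂ : V} (hpq : p ≠ q) (hm : m₁ ≠ m₂)
    (h₁ : TwoVPaths E p m₁) (h₁' : TwoVPaths E m₁ q) (h₂ : TwoVPaths E p m₂)
    (h₂' : TwoVPaths E m₂ q) : TwoVPaths E p q := by
  refine twoVPaths_of_forall_reflTransGen hpq (fun w hwp hwq => ?_) fun a b =>
    (h₁.reflTransGen_delE a b).trans (h₁'.reflTransGen_delE a b)
  by_cases hw : w = m₁
  · subst hw
    exact (h₂.reflTransGen_delV hwp hm).trans (h₂'.reflTransGen_delV hm hwq)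
  · exact (h₁.reflTransGen_delV hwp hw).trans (h₁'.reflTransGen_delV hw hwq)

theorem stmt16_general (E : V → V → Prop) (u v x y : V)
    (huv : u ≠ v)
    (hxy : x ≠ y)
    (h1 : TwoVConn E u x) (h2 : TwoVConn E v x)
    (h3 : TwoVConn E u y) (h4 : TwoVConn E v y) :
    TwoVConn E x y ∧ TwoVConn E u v := by
  refine ⟨⟨hxy, ?_, ?_⟩, ⟨huv, ?_, ?_⟩⟩
  · exact .glue hxy huv h1.2.2 h3.2.1 h2.2.2 h4.2.1
  · exact .glue hxy.symm huv h3.2.2 h1.2.1 h4.2.2 h2.2.1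
  · exact .glue huv hxy h1.2.1 h2.2.2 h3.2.1 h4.2.2
  · exact .glue huv.symm hxy h2.2.1 h1.2.2 h4.2.1 h3.2.2

/-- if `u,v,x,y` are distinct vertices with `u↔2v x`, `v↔2v x`,
`u↔2v y`, `v↔2v y`, then `x↔2v y` and `u↔2v v`. -/
theorem stmt16 (E : V → V → Prop) (u v x y : V)
    (huv : u ≠ v) (hux : u ≠ x) (huy : u ≠ y) (hvx : v ≠ x) (hvy : v ≠ y)
    (hxy : x ≠ y)
    (h1 : TwoVConn E u x) (h2 : TwoVConn E v x)
    (h3 : TwoVConn E u y) (h4 : TwoVConn E v y) :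
    TwoVConn E x y ∧ TwoVConn E u v :=
  stmt16_general E u v x y huv hxy h1 h2 h3 h4
end
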